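/- arXiv:2210.00288 — 5 statements merged into one kernel-verified Lean document; each statement's English description precedes it below -/
import Mathlib

section
/- In the algebra U generated by e, f, ω, ω', ω⁻¹, ω'⁻¹ over a field containing elements r, s with r ≠ s, subject to relations ωω' = ω'ω, ωω⁻¹ = 1 = ω'ω'⁻¹, ωeω⁻¹ = q e, ω'eω'⁻¹ = q⁻¹ e, ωfω⁻¹ = q⁻¹ f, ω'fω'⁻¹ = q f, and ef + fe = (ω - ω')/(r - s), where q² = rs, for every positive integer m one has: f^m e + (-1)^(m-1) e f^m = f^(m-1) · ( ((q'^(-m) - 1)/(q'^(-1) - 1)) ω - ((q'^m - 1)/(q' - 1)) ω' ) · (r - s)⁻¹, where q' = -q. -/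
lemma geom_step' {F : Type*} [Field F] {x : F} (hx : x ≠ 1) (n : ℕ) :
    (x ^ (n + 1) - 1) / (x - 1) = (x ^ n - 1) / (x - 1) + x ^ n := by
  have h : x - 1 ≠ 0 := sub_ne_zero.mpr hx
  field_simp
  ring

lemma comm_pow_aux {F A : Type*} [Field F] [Ring A] [Algebra F A]
    (c : F) (x y : A) (h : x * y = c • (y * x)) :
    ∀ m : ℕ, x * y ^ m = c ^ m • (y ^ m * x) := by
  intro m
  induction m with
  | zero => simp
  | succ n ih =>
    calc x * y ^ (n + 1) = (x * y) * y ^ n := by rw [pow_succ', ← mul_assoc]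
    _ = c • (y * (x * y ^ n)) := by rw [h, smul_mul_assoc, mul_assoc]
    _ = c ^ (n + 1) • (y ^ (n + 1) * x) := by
        rw [ih, mul_smul_comm, smul_smul, ← mul_assoc, ← pow_succ', ← pow_succ']

/-- Lemma 2.2 (2.5) in U_{r,s}(osp(1,2)): with q = r^{1/2}s^{1/2}, q' = -q,
`f^m e + (-1)^(m-1) e f^m = f^(m-1) ((q'^{-m}-1)/(q'^{-1}-1) ω - (q'^m-1)/(q'-1) ω') (r-s)⁻¹`. -/
theorem fm_e_relation {F A : Type*} [Field F] [Ring A] [Algebra F A]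
    (r2 s2 : F) (hr2 : r2 ≠ 0) (hs2 : s2 ≠ 0) (hrs : r2 ^ 2 ≠ s2 ^ 2)
    (hq'1 : -(r2 * s2) ≠ 1) (hq'i1 : (-(r2 * s2))⁻¹ ≠ 1)
    (e f ω ω' ωi ω'i : A)
    (hcomm : ω * ω' = ω' * ω)
    (hωinv : ω * ωi = 1) (hωinv' : ωi * ω = 1)
    (hω'inv : ω' * ω'i = 1) (hω'inv' : ω'i * ω' = 1)
    (hωe : ω * e * ωi = (r2 * s2) • e)
    (hω'e : ω' * e * ω'i = (r2 * s2)⁻¹ • e)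
    (hωf : ω * f * ωi = (r2 * s2)⁻¹ • f)
    (hω'f : ω' * f * ω'i = (r2 * s2) • f)
    (hef : e * f + f * e = (r2 ^ 2 - s2 ^ 2)⁻¹ • (ω - ω')) :
    ∀ m : ℕ, 0 < m →
      f ^ m * e + ((-1 : F) ^ (m - 1)) • (e * f ^ m) =
        (r2 ^ 2 - s2 ^ 2)⁻¹ • (f ^ (m - 1) *
          ((((-(r2 * s2)) ^ (-(m : ℤ)) - 1) / ((-(r2 * s2))⁻¹ - 1)) • ω -
            (((-(r2 * s2)) ^ (m : ℤ) - 1) / (-(r2 * s2) - 1)) • ω')) := by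
  set q : F := r2 * s2 with hqdef
  set c : F := (r2 ^ 2 - s2 ^ 2)⁻¹ with hcdef
  -- zpow to pow conversions
  have hz1 : ∀ n : ℕ, (-q) ^ (-(n : ℤ)) = ((-q)⁻¹) ^ n := by
    intro n; rw [zpow_neg, zpow_natCast, inv_pow]
  have hz2 : ∀ n : ℕ, (-q) ^ ((n : ℕ) : ℤ) = (-q) ^ n := fun n => zpow_natCast _ n
  -- commutation relations
  have hωf2 : ω * f = q⁻¹ • (f * ω) := by
    have h := congrArg (· * ω) hωf
    simpa [mul_assoc, hωinv', smul_mul_assoc] using h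
  have hω'f2 : ω' * f = q • (f * ω') := by
    have h := congrArg (· * ω') hω'f
    simpa [mul_assoc, hω'inv', smul_mul_assoc] using h
  have hωfm := comm_pow_aux q⁻¹ ω f hωf2
  have hω'fm := comm_pow_aux q ω' f hω'f2
  have hfe : f * e = c • (ω - ω') - e * f := by
    refine eq_sub_of_add_eq ?_
    rw [add_comm]; exact hef
  intro m hm
  induction m, hm using Nat.le_induction with
  | base =>
    have hA1 : ((-q) ^ (-((1:ℕ) : ℤ)) - 1) / ((-q)⁻¹ - 1) = 1 := by
      rw [hz1, pow_one]
      exact div_self (sub_ne_zero.mpr hq'i1)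
    have hB1 : ((-q) ^ (((1:ℕ)) : ℤ) - 1) / (-q - 1) = 1 := by
      rw [hz2, pow_one]
      exact div_self (sub_ne_zero.mpr hq'1)
    simp only [hA1, hB1, pow_one, pow_zero, one_smul, one_mul, Nat.sub_self]
    rw [add_comm]; exact hef
  | succ n hn ih =>
    obtain ⟨k, rfl⟩ : ∃ k, n = k + 1 := ⟨n - 1, (Nat.succ_pred_eq_of_pos hn).symm⟩
    simp only [Nat.add_sub_cancel] at ih ⊢
    -- rewrite zpows in ih and goal
    rw [hz1, hz2] at ih
    rw [hz1, hz2]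
    set x : F := (-q)⁻¹ with hxdef
    set y : F := -q with hydef
    have hx1 : x ≠ 1 := hq'i1
    have hy1 : y ≠ 1 := hq'1
    set T : A := ((x ^ (k+1) - 1) / (x - 1)) • ω - ((y ^ (k+1) - 1) / (y - 1)) • ω' with hTdef
    have h1 : f ^ (k+1) * e = c • (f ^ k * T) - ((-1:F) ^ k) • (e * f ^ (k+1)) :=
      eq_sub_of_add_eq ih
    have h2 : f ^ (k+2) * e
        = c • (f ^ (k+1) * T) - ((-1:F) ^ k) • (f * e * f ^ (k+1)) := by
      calc f ^ (k+2) * e = f * (f ^ (k+1) * e) := by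
            rw [← mul_assoc, ← pow_succ']
      _ = f * (c • (f ^ k * T) - ((-1:F) ^ k) • (e * f ^ (k+1))) := by rw [h1]
      _ = c • (f ^ (k+1) * T) - ((-1:F) ^ k) • (f * e * f ^ (k+1)) := by
            rw [mul_sub, mul_smul_comm, mul_smul_comm, ← mul_assoc, ← mul_assoc,
              ← pow_succ']
    have h3 : f * e * f ^ (k+1)
        = c • ((q⁻¹) ^ (k+1) • (f ^ (k+1) * ω) - q ^ (k+1) • (f ^ (k+1) * ω'))
          - e * f ^ (k+2) := by
      rw [hfe, sub_mul, smul_mul_assoc, sub_mul, smul_sub, hωfm, hω'fm,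
        mul_assoc, ← pow_succ']
      simp [smul_sub]
    rw [geom_step' hx1 (k+1), geom_step' hy1 (k+1), h2, h3, hTdef]
    have hxq : x = -(q⁻¹) := by rw [hxdef, ← neg_inv]
    rw [hxq, hydef]
    simp only [mul_sub, mul_smul_comm, smul_sub, smul_smul]
    match_scalars <;> ring
end

section
/- In the algebra U = U_{r,s}(osp(1,2)), for every positive integer m one has: e^m f + (-1)^(m-1) f e^m = e^(m-1) · ( ((q'^m - 1)/(q' - 1)) ω - ((q'^(-m) - 1)/(q'^(-1) - 1)) ω' ) · (r - s)⁻¹, where q' = -q and q = r^{1/2} s^{1/2}. -/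
private lemma auxA {F : Type*} [Field F] (x : F) (hx : x - 1 ≠ 0) (n : ℕ) :
    1 + x * ((x ^ n - 1) / (x - 1)) = (x ^ (n + 1) - 1) / (x - 1) := by
  field_simp
  ring

private lemma auxB {F : Type*} [Field F] (x : F) (hx : x⁻¹ - 1 ≠ 0) (n : ℕ) :
    1 + x⁻¹ * (((x ^ n)⁻¹ - 1) / (x⁻¹ - 1)) = ((x ^ (n + 1))⁻¹ - 1) / (x⁻¹ - 1) := by
  rw [← inv_pow, ← inv_pow]
  exact auxA x⁻¹ hx n

/-- Lemma 2.2 (2.6) in U_{r,s}(osp(1,2)): with q = r^{1/2}s^{1/2}, q' = -q,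
`e^m f + (-1)^(m-1) f e^m = e^(m-1) ((q'^m-1)/(q'-1) ω - (q'^{-m}-1)/(q'^{-1}-1) ω') (r-s)⁻¹`. -/
theorem em_f_relation {F A : Type*} [Field F] [Ring A] [Algebra F A]
    (r2 s2 : F) (hr2 : r2 ≠ 0) (hs2 : s2 ≠ 0) (hrs : r2 ^ 2 ≠ s2 ^ 2)
    (hq'1 : -(r2 * s2) ≠ 1) (hq'i1 : (-(r2 * s2))⁻¹ ≠ 1)
    (e f ω ω' ωi ω'i : A)
    (hcomm : ω * ω' = ω' * ω)
    (hωinv : ω * ωi = 1) (hωinv' : ωi * ω = 1)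
    (hω'inv : ω' * ω'i = 1) (hω'inv' : ω'i * ω' = 1)
    (hωe : ω * e * ωi = (r2 * s2) • e)
    (hω'e : ω' * e * ω'i = (r2 * s2)⁻¹ • e)
    (hωf : ω * f * ωi = (r2 * s2)⁻¹ • f)
    (hω'f : ω' * f * ω'i = (r2 * s2) • f)
    (hef : e * f + f * e = (r2 ^ 2 - s2 ^ 2)⁻¹ • (ω - ω')) :
    ∀ m : ℕ, 0 < m →
      e ^ m * f + ((-1 : F) ^ (m - 1)) • (f * e ^ m) =
        (r2 ^ 2 - s2 ^ 2)⁻¹ • (e ^ (m - 1) *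
          ((((-(r2 * s2)) ^ (m : ℤ) - 1) / (-(r2 * s2) - 1)) • ω -
            (((-(r2 * s2)) ^ (-(m : ℤ)) - 1) / ((-(r2 * s2))⁻¹ - 1)) • ω')) := by
  have hq : r2 * s2 ≠ 0 := mul_ne_zero hr2 hs2
  have hq' : -(r2 * s2) ≠ 0 := neg_ne_zero.mpr hq
  have hd1 : -(r2 * s2) - 1 ≠ 0 := sub_ne_zero.mpr hq'1
  have hd2 : (-(r2 * s2))⁻¹ - 1 ≠ 0 := sub_ne_zero.mpr hq'i1
  set c : F := (r2 ^ 2 - s2 ^ 2)⁻¹ with hc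
  have hωe' : ω * e = (r2 * s2) • (e * ω) := by
    have h := congrArg (· * ω) hωe
    simpa [mul_assoc, hωinv', smul_mul_assoc] using h
  have hω'e' : ω' * e = (r2 * s2)⁻¹ • (e * ω') := by
    have h := congrArg (· * ω') hω'e
    simpa [mul_assoc, hω'inv', smul_mul_assoc] using h
  have hef' : e * f = c • (ω - ω') - f * e := eq_sub_of_add_eq hef
  intro m hm
  induction m, hm using Nat.le_induction with
  | base =>
      simp only [pow_one, Nat.sub_self, pow_zero, one_smul, Nat.cast_one, zpow_one, pow_zero,
        one_mul]
      rw [hef]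
      congr 1
      have h1 : (-(r2 * s2) - 1) / (-(r2 * s2) - 1) = 1 := div_self hd1
      have h2 : ((-(r2 * s2))⁻¹ - 1) / ((-(r2 * s2))⁻¹ - 1) = 1 := div_self hd2
      rw [show ((-1 : ℤ) = -(1:ℤ)) from rfl, zpow_neg, zpow_one]
      rw [h1, h2, one_smul, one_smul]
  | succ n hn ih =>
      obtain ⟨k, rfl⟩ : ∃ k, n = k + 1 := ⟨n - 1, (Nat.succ_pred_eq_of_pos hn).symm⟩
      simp only [Nat.add_sub_cancel] at ih ⊢
      -- scalar abbreviations
      set An : F := ((-(r2 * s2)) ^ ((k + 1 : ℕ) : ℤ) - 1) / (-(r2 * s2) - 1) with hAn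
      set Bn : F := ((-(r2 * s2)) ^ (-((k + 1 : ℕ) : ℤ)) - 1) / ((-(r2 * s2))⁻¹ - 1) with hBn
      have step1 : e ^ (k + 1 + 1) * f + ((-1 : F) ^ (k + 1)) • (f * e ^ (k + 1 + 1)) =
          c • (e ^ (k + 1) * (ω - ω')) -
            (e ^ (k + 1) * f + ((-1 : F) ^ k) • (f * e ^ (k + 1))) * e := by
        rw [pow_succ e (k + 1)]
        rw [show ((-1 : F) ^ (k + 1)) = -((-1 : F) ^ k) by rw [pow_succ]; ring]
        rw [mul_assoc (e ^ (k + 1)) e f, hef', mul_sub, mul_smul_comm,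
          ← mul_assoc (e ^ (k + 1)) f e, ← mul_assoc f (e ^ (k + 1)) e, neg_smul,
          ← sub_eq_add_neg, sub_sub, add_mul, smul_mul_assoc]
      rw [step1, ih]
      -- move `e` inside
      have swap : (e ^ k * (An • ω - Bn • ω')) * e =
          e ^ (k + 1) * (((r2 * s2) * An) • ω - ((r2 * s2)⁻¹ * Bn) • ω') := by
        rw [mul_assoc, sub_mul, smul_mul_assoc, smul_mul_assoc, hωe', hω'e', smul_smul, smul_smul,
          pow_succ, mul_assoc]
        congr 1
        rw [mul_sub, mul_smul_comm, mul_smul_comm, mul_comm An, mul_comm Bn]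
      rw [smul_mul_assoc, swap, ← smul_sub, ← mul_sub]
      -- scalar identities
      have hA' : (1 : F) - (r2 * s2) * An =
          ((-(r2 * s2)) ^ ((k + 1 + 1 : ℕ) : ℤ) - 1) / (-(r2 * s2) - 1) := by
        have := auxA (-(r2 * s2)) hd1 (k + 1)
        rw [hAn, zpow_natCast, zpow_natCast]
        rw [← this]
        ring
      have hB' : (1 : F) - (r2 * s2)⁻¹ * Bn =
          ((-(r2 * s2)) ^ (-((k + 1 + 1 : ℕ) : ℤ)) - 1) / ((-(r2 * s2))⁻¹ - 1) := by
        have := auxB (-(r2 * s2)) hd2 (k + 1)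
        rw [hBn, zpow_neg, zpow_neg, zpow_natCast, zpow_natCast]
        rw [← this]
        rw [show (-(r2 * s2))⁻¹ = -(r2 * s2)⁻¹ by rw [neg_inv]]
        ring
      have inner : (ω - ω') - ((r2 * s2 * An) • ω - ((r2 * s2)⁻¹ * Bn) • ω') =
          (((-(r2 * s2)) ^ ((k + 1 + 1 : ℕ) : ℤ) - 1) / (-(r2 * s2) - 1)) • ω -
            (((-(r2 * s2)) ^ (-((k + 1 + 1 : ℕ) : ℤ)) - 1) / ((-(r2 * s2))⁻¹ - 1)) • ω' := by
        rw [← hA', ← hB', sub_smul, sub_smul, one_smul, one_smul]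
        abel
      rw [inner]
end

section
/- For an invertible element u of a commutative ring such that u - u⁻¹ is also invertible, and every natural number m: D_{2m+1}(u - u⁻¹, -1) = (u - u⁻¹) · R_m(u² + u^{-2}), where R_m is the sequence of polynomials satisfying Σ_{m≥0} R_m(C) z^m = (1+z)/(1 - Cz + z²), i.e., R_0(C) = 1, R_1(C) = C + 1, R_{m+2}(C) = C R_{m+1}(C) - R_m(C). -/
/-- Dickson polynomials of the first kind: D 0 = 2, D 1 = u, D (m+2) = u * D (m+1) - a * D m. -/
def Dick {R : Type*} [CommRing R] (u a : R) : ℕ → R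
  | 0 => 2
  | 1 => u
  | (m + 2) => u * Dick u a (m + 1) - a * Dick u a m

/-- The polynomials R_m: R 0 = 1, R 1 = C + 1, R (m+2) = C * R (m+1) - R m. -/
def Rp {R : Type*} [CommRing R] (C : R) : ℕ → R
  | 0 => 1
  | 1 => C + 1
  | (m + 2) => C * Rp C (m + 1) - Rp C m

lemma dick_aux {R : Type*} [CommRing R] (u v : R) (hv : u * v = 1) :
    ∀ n, Dick (u - v) (-1) n = u ^ n + (-1) ^ n * v ^ n
  | 0 => by norm_num [Dick]
  | 1 => by simp [Dick]; ring
  | (n + 2) => by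
    have h1 := dick_aux u v hv (n + 1)
    have h2 := dick_aux u v hv n
    simp only [Dick, h1, h2]
    linear_combination (-(u ^ n) + (-1) ^ (n + 1) * v ^ n) * hv

lemma rp_aux {R : Type*} [CommRing R] (u v : R) (hv : u * v = 1) :
    ∀ m, (u - v) * Rp (u ^ 2 + v ^ 2) m = u ^ (2 * m + 1) - v ^ (2 * m + 1)
  | 0 => by simp [Rp]
  | 1 => by
    simp only [Rp]
    linear_combination (v - u) * hv
  | (m + 2) => by
    have h1 := rp_aux u v hv (m + 1)
    have h2 := rp_aux u v hv m
    simp only [Rp, mul_sub, mul_add, Nat.mul_succ]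
    ring_nf
    ring_nf at h1 h2
    linear_combination (u ^ 2 + v ^ 2) * h1 - h2 +
      (u ^ (2 * m + 1) * v - v ^ (2 * m + 1) * u + u ^ (2 * m) * (u ^ 2 * v - u * v + u) +
        v ^ (2 * m) * (-(u * v ^ 2) + u * v - v)) * hv

theorem dickson_odd_eq_scasimir_mul_R {R : Type*} [CommRing R] (u : Rˣ)
    (hu : IsUnit ((u : R) - ((u⁻¹ : Rˣ) : R))) (m : ℕ) :
    Dick ((u : R) - ((u⁻¹ : Rˣ) : R)) (-1) (2 * m + 1) =
      ((u : R) - ((u⁻¹ : Rˣ) : R)) * Rp ((u : R) ^ 2 + ((u⁻¹ : Rˣ) : R) ^ 2) m := by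
  have hv : (u : R) * ((u⁻¹ : Rˣ) : R) = 1 := u.mul_inv
  rw [dick_aux _ _ hv, rp_aux _ _ hv]
  have : (-1 : R) ^ (2 * m + 1) = -1 := Odd.neg_one_pow ⟨m, by ring⟩
  rw [this]; ring
end

section
/- In U = U_{r,s}(osp(1,2)) with q not a root of unity, if an element P commutes with ω and ω' and lies in the span of monomials f^a e^b ω^c ω'^d (a,b ∈ ℕ, c,d ∈ ℤ), then P lies in the subalgebra generated by c̃, ω^{±1}, ω'^{±1}, where c̃ is the Scasimir operator. In particular, the centralizer of {ω, ω'} in U is T = F[c̃, ω^{±1}, ω'^{±1}]. -/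
/-- Powers of a non-root-of-unity are injective. -/
lemma pow_inj_of_not_root {F : Type*} [Field F] {q : F} (hq0 : q ≠ 0)
    (hq : ∀ n : ℕ, 0 < n → q ^ n ≠ 1) {a b : ℕ} (h : q ^ a = q ^ b) : a = b := by
  have key : ∀ a b : ℕ, a < b → q ^ a = q ^ b → False := by
    intro a b hab h
    apply hq (b - a) (by omega)
    have h2 : q ^ a * q ^ (b - a) = q ^ a * 1 := by
      rw [← pow_add, Nat.add_sub_cancel' hab.le, mul_one, h]
    exact mul_left_cancel₀ (pow_ne_zero a hq0) h2
  rcases lt_trichotomy a b with hl | he | hl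
  · exact absurd (key a b hl h) (by simp)
  · exact he
  · exact absurd (key b a hl h.symm) (by simp)

/-- If q is not a root of unity and P ∈ U_{r,s}(osp(1,2)) commutes with ω and ω'
(P lying in the span of the PBW monomials f^a e^b ω^c ω'^d), then P belongs to the
subalgebra T generated by the Scasimir c̃ and ω^{±1}, ω'^{±1}. -/
theorem centralizer_of_cartan {F A : Type*} [Field F] [Ring A] [Algebra F A]
    (r2 s2 : F) (hr2 : r2 ≠ 0) (hs2 : s2 ≠ 0) (hrs : r2 ^ 2 ≠ s2 ^ 2)
    (hq : ∀ n : ℕ, 0 < n → (r2 * s2) ^ n ≠ 1)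
    (e f : A) (ω ω' : Aˣ)
    (hcomm : (ω : A) * (ω' : A) = (ω' : A) * (ω : A))
    (hωe : (ω : A) * e * ((ω⁻¹ : Aˣ) : A) = (r2 * s2) • e)
    (hω'e : (ω' : A) * e * ((ω'⁻¹ : Aˣ) : A) = (r2 * s2)⁻¹ • e)
    (hωf : (ω : A) * f * ((ω⁻¹ : Aˣ) : A) = (r2 * s2)⁻¹ • f)
    (hω'f : (ω' : A) * f * ((ω'⁻¹ : Aˣ) : A) = (r2 * s2) • f)
    (hef : e * f + f * e = (r2 ^ 2 - s2 ^ 2)⁻¹ • ((ω : A) - (ω' : A)))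
    (c : A)
    (hc : c = (r2 ^ 2) • (ω : A) - (s2 ^ 2) • (ω' : A) -
      ((r2 + s2) * (r2 ^ 2 - s2 ^ 2)) • (f * e))
    -- PBW: the monomials f^a e^b ω^c ω'^d are linearly independent
    (hPBW : LinearIndependent F (fun p : ℕ × ℕ × ℤ × ℤ =>
      f ^ p.1 * e ^ p.2.1 * ((ω ^ p.2.2.1 : Aˣ) : A) * ((ω' ^ p.2.2.2 : Aˣ) : A)))
    (P : A)
    (hPspan : P ∈ Submodule.span F (Set.range (fun p : ℕ × ℕ × ℤ × ℤ =>
      f ^ p.1 * e ^ p.2.1 * ((ω ^ p.2.2.1 : Aˣ) : A) * ((ω' ^ p.2.2.2 : Aˣ) : A))))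
    (hPω : P * (ω : A) = (ω : A) * P)
    (hPω' : P * (ω' : A) = (ω' : A) * P) :
    P ∈ Algebra.adjoin F
      ({c, (ω : A), ((ω⁻¹ : Aˣ) : A), (ω' : A), ((ω'⁻¹ : Aˣ) : A)} : Set A) := by
  set q : F := r2 * s2 with hqdef
  have hq0 : q ≠ 0 := mul_ne_zero hr2 hs2
  set T := Algebra.adjoin F
      ({c, (ω : A), ((ω⁻¹ : Aˣ) : A), (ω' : A), ((ω'⁻¹ : Aˣ) : A)} : Set A) with hT
  -- basic memberships
  have hcT : c ∈ T := Algebra.subset_adjoin (by simp)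
  have hωT : (ω : A) ∈ T := Algebra.subset_adjoin (by simp)
  have hωiT : ((ω⁻¹ : Aˣ) : A) ∈ T := Algebra.subset_adjoin (by simp)
  have hω'T : (ω' : A) ∈ T := Algebra.subset_adjoin (by simp)
  have hω'iT : ((ω'⁻¹ : Aˣ) : A) ∈ T := Algebra.subset_adjoin (by simp)
  have hzpow : ∀ (u : Aˣ), ((u : A) ∈ T) → (((u⁻¹ : Aˣ) : A) ∈ T) →
      ∀ n : ℤ, ((u ^ n : Aˣ) : A) ∈ T := by
    intro u hu hui n
    cases n with
    | ofNat k =>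
        rw [Int.ofNat_eq_natCast, zpow_natCast, Units.val_pow_eq_pow_val]
        exact pow_mem hu k
    | negSucc k =>
        rw [zpow_negSucc, ← inv_pow, Units.val_pow_eq_pow_val]
        exact pow_mem hui (k + 1)
  -- move relations
  have hωe' : (ω : A) * e = q • (e * (ω : A)) := by
    have h := congrArg (· * (ω : A)) hωe
    simpa [mul_assoc, Units.inv_mul, smul_mul_assoc] using h
  have hωf' : (ω : A) * f = q⁻¹ • (f * (ω : A)) := by
    have h := congrArg (· * (ω : A)) hωf
    simpa [mul_assoc, Units.inv_mul, smul_mul_assoc] using h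
  have hω'e' : (ω' : A) * e = q⁻¹ • (e * (ω' : A)) := by
    have h := congrArg (· * (ω' : A)) hω'e
    simpa [mul_assoc, Units.inv_mul, smul_mul_assoc] using h
  -- generic moving lemma
  have mul_move : ∀ (u : Aˣ) (x y : A) (t s : F), (u : A) * x = t • (x * (u : A)) →
      (u : A) * y = s • (y * (u : A)) →
      (u : A) * (x * y) = (t * s) • (x * y * (u : A)) := by
    intro u x y t s hx hy
    rw [← mul_assoc, hx, smul_mul_assoc, mul_assoc, hy, mul_smul_comm, smul_smul, mul_assoc]
  -- powers
  have hωeb : ∀ b : ℕ, (ω : A) * e ^ b = (q ^ b) • (e ^ b * (ω : A)) := by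
    intro b
    induction b with
    | zero => simp
    | succ b ih =>
        have := mul_move ω e (e ^ b) q (q ^ b) hωe' ih
        rw [pow_succ'] at *
        simpa [pow_succ, mul_comm, mul_assoc] using this
  have hωfa : ∀ a : ℕ, (ω : A) * f ^ a = ((q⁻¹) ^ a) • (f ^ a * (ω : A)) := by
    intro a
    induction a with
    | zero => simp
    | succ a ih =>
        have := mul_move ω f (f ^ a) q⁻¹ (q⁻¹ ^ a) hωf' ih
        rw [pow_succ'] at *
        simpa [pow_succ, mul_comm, mul_assoc] using this
  have hω'eb : ∀ b : ℕ, (ω' : A) * e ^ b = ((q⁻¹) ^ b) • (e ^ b * (ω' : A)) := by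
    intro b
    induction b with
    | zero => simp
    | succ b ih =>
        have := mul_move ω' e (e ^ b) q⁻¹ (q⁻¹ ^ b) hω'e' ih
        rw [pow_succ'] at *
        simpa [pow_succ, mul_comm, mul_assoc] using this
  -- commutes with zpow
  have hcommU : ω * ω' = ω' * ω := Units.ext (by simpa using hcomm)
  have hωzω' : ∀ d : ℤ, (ω : A) * ((ω' ^ d : Aˣ) : A) = ((ω' ^ d : Aˣ) : A) * (ω : A) := by
    intro d
    have h := (Commute.zpow_right (hcommU : Commute ω ω') d)
    have := congrArg (Units.val) h
    simpa [Units.val_mul] using this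
  have hωzω : ∀ d : ℤ, (ω : A) * ((ω ^ d : Aˣ) : A) = ((ω ^ d : Aˣ) : A) * (ω : A) := by
    intro d
    have h := (Commute.zpow_right (Commute.refl ω) d)
    have := congrArg (Units.val) h
    simpa [Units.val_mul] using this
  -- conjugation coefficient on monomials
  set v : ℕ × ℕ × ℤ × ℤ → A := fun p =>
    f ^ p.1 * e ^ p.2.1 * ((ω ^ p.2.2.1 : Aˣ) : A) * ((ω' ^ p.2.2.2 : Aˣ) : A) with hv
  have hconj : ∀ p : ℕ × ℕ × ℤ × ℤ,
      (ω : A) * v p = ((q⁻¹) ^ p.1 * q ^ p.2.1) • (v p * (ω : A)) := by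
    rintro ⟨a, b, cc, d⟩
    have h1 : (ω : A) * (f ^ a * e ^ b) = ((q⁻¹) ^ a * q ^ b) • (f ^ a * e ^ b * (ω : A)) :=
      mul_move ω _ _ _ _ (hωfa a) (hωeb b)
    have h2 : (ω : A) * (f ^ a * e ^ b * ((ω ^ cc : Aˣ) : A))
        = ((q⁻¹) ^ a * q ^ b * 1) • (f ^ a * e ^ b * ((ω ^ cc : Aˣ) : A) * (ω : A)) :=
      mul_move ω _ (((ω ^ cc : Aˣ) : A)) _ 1 h1 (by rw [one_smul]; exact hωzω cc)
    have h3 := mul_move ω _ (((ω' ^ d : Aˣ) : A)) _ 1 h2 (by rw [one_smul]; exact hωzω' d)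
    simpa [hv] using h3
  -- the element X = f*e and the subalgebra T
  have hrs' : r2 ^ 2 - s2 ^ 2 ≠ 0 := sub_ne_zero.mpr hrs
  have hrps : r2 + s2 ≠ 0 := by
    intro h
    apply hrs
    have : r2 = -s2 := by linear_combination h
    rw [this]; ring
  have hμ : (r2 + s2) * (r2 ^ 2 - s2 ^ 2) ≠ 0 := mul_ne_zero hrps hrs'
  obtain ⟨X, hX⟩ : ∃ X : A, X = f * e := ⟨_, rfl⟩
  rw [← hX] at hc hef
  set κ : F := (r2 ^ 2 - s2 ^ 2)⁻¹ with hκ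
  have hXval : X = ((r2 + s2) * (r2 ^ 2 - s2 ^ 2))⁻¹ •
      ((r2 ^ 2) • (ω : A) - (s2 ^ 2) • (ω' : A) - c) := by
    rw [hc, sub_sub_cancel, smul_smul, inv_mul_cancel₀ hμ, one_smul]
  have hXT : X ∈ T := by
    rw [hXval]
    exact T.smul_mem (sub_mem (sub_mem (T.smul_mem hωT _) (T.smul_mem hω'T _)) hcT) _
  -- X commutes appropriately: key relation X*e = -(e*X) + e*Y
  obtain ⟨Y, hY⟩ : ∃ Y : A, Y = (κ * q) • (ω : A) - (κ * q⁻¹) • (ω' : A) := ⟨_, rfl⟩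
  obtain ⟨W, hW⟩ : ∃ W : ℕ → A,
      W = fun b => (κ * q * q ^ b) • (ω : A) - (κ * q⁻¹ * (q⁻¹) ^ b) • (ω' : A) := ⟨_, rfl⟩
  have hefX : e * f = κ • ((ω : A) - (ω' : A)) - X := by
    rw [eq_sub_iff_add_eq]; exact hef
  have hXe : X * e = -(e * X) + e * Y := by
    have h1 : e * X = (e * f) * e := by rw [hX, mul_assoc]
    have h2 : e * X = κ • (q • (e * (ω : A))) - κ • (q⁻¹ • (e * (ω' : A))) - X * e := by
      rw [h1, hefX, sub_mul, smul_mul_assoc, sub_mul, smul_sub, hωe', hω'e']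
    rw [hY, mul_sub, mul_smul_comm, mul_smul_comm, h2]
    module
  have hWT : ∀ b, W b ∈ T := by
    intro b
    rw [hW]
    exact sub_mem (T.smul_mem hωT _) (T.smul_mem hω'T _)
  have hYe : ∀ b : ℕ, Y * e ^ b = e ^ b * W b := by
    intro b
    rw [hY, hW, sub_mul, smul_mul_assoc, smul_mul_assoc, hωeb, hω'eb,
      mul_sub, mul_smul_comm, mul_smul_comm]
    module
  -- key lemma: pushing X through e^b
  have hZ : ∀ b : ℕ, ∃ Z, Z ∈ T ∧ X * e ^ b = ((-1 : F) ^ b) • (e ^ b * X) + e ^ b * Z := by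
    intro b
    induction b with
    | zero => exact ⟨0, zero_mem T, by simp⟩
    | succ b ih =>
        obtain ⟨Z, hZT, hZeq⟩ := ih
        refine ⟨W b - Z, sub_mem (hWT b) hZT, ?_⟩
        calc X * e ^ (b + 1) = (X * e) * e ^ b := by rw [pow_succ', ← mul_assoc]
          _ = (-(e * X) + e * Y) * e ^ b := by rw [hXe]
          _ = -(e * (X * e ^ b)) + e * (Y * e ^ b) := by
              rw [add_mul, neg_mul, mul_assoc e X, mul_assoc e Y]
          _ = -(e * (((-1 : F) ^ b) • (e ^ b * X) + e ^ b * Z)) + e * (e ^ b * W b) := by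
              rw [hZeq, hYe b]
          _ = ((-1 : F) ^ (b + 1)) • (e ^ (b + 1) * X) + e ^ (b + 1) * (W b - Z) := by
              simp only [mul_add, mul_sub, mul_smul_comm, pow_succ', mul_assoc]
              module
  -- f^a e^a ∈ T
  have hfea : ∀ a : ℕ, f ^ a * e ^ a ∈ T := by
    intro a
    induction a with
    | zero => simpa using one_mem T
    | succ a ih =>
        obtain ⟨Z, hZT, hZeq⟩ := hZ a
        have key : f ^ (a + 1) * e ^ (a + 1)
            = ((-1 : F) ^ a) • ((f ^ a * e ^ a) * X) + (f ^ a * e ^ a) * Z := by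
          have h1 : f ^ (a + 1) * e ^ (a + 1) = f ^ a * (X * e ^ a) := by
            rw [pow_succ, pow_succ', hX]
            simp only [mul_assoc]
          rw [h1, hZeq, mul_add, mul_smul_comm]
          simp only [mul_assoc]
        rw [key]
        exact add_mem (T.smul_mem (mul_mem ih hXT) _) (mul_mem ih hZT)
  -- monomials with a = b are in T
  have hmonT : ∀ p : ℕ × ℕ × ℤ × ℤ, p.1 = p.2.1 → v p ∈ T := by
    rintro ⟨a, b, cc, d⟩ hab
    simp only at hab
    subst hab
    exact mul_mem (mul_mem (hfea a) (hzpow ω hωT hωiT cc)) (hzpow ω' hω'T hω'iT d)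
  -- extract the finsupp representation
  obtain ⟨l, hl⟩ := Finsupp.mem_span_range_iff_exists_finsupp.mp hPspan
  have hlv : l.sum (fun p a => a • v p) = P := hl
  -- derive the coefficient equation
  have hsum2 : ∑ p ∈ l.support, (l p * ((q⁻¹) ^ p.1 * q ^ p.2.1 - 1)) • v p = 0 := by
    have hzero : (∑ p ∈ l.support, (l p * ((q⁻¹) ^ p.1 * q ^ p.2.1 - 1)) • v p) * (ω : A)
        = 0 := by
      have expand : (∑ p ∈ l.support, (l p * ((q⁻¹) ^ p.1 * q ^ p.2.1 - 1)) • v p) * (ω : A)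
          = (ω : A) * P - P * (ω : A) := by
        rw [← hlv, Finsupp.sum, Finset.sum_mul, Finset.mul_sum, Finset.sum_mul,
          ← Finset.sum_sub_distrib]
        apply Finset.sum_congr rfl
        intro p _
        simp only [mul_smul_comm, smul_mul_assoc, hconj p]
        module
      rw [expand, hPω, sub_self]
    have h := congrArg (· * ((ω⁻¹ : Aˣ) : A)) hzero
    simpa [mul_assoc, Units.mul_inv] using h
  have hcoef := linearIndependent_iff'.mp hPBW l.support
    (fun p => l p * ((q⁻¹) ^ p.1 * q ^ p.2.1 - 1)) (by simpa [hv] using hsum2)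
  -- every monomial in the support has a = b
  have hdiag : ∀ p ∈ l.support, p.1 = p.2.1 := by
    intro p hp
    have hlp : l p ≠ 0 := Finsupp.mem_support_iff.mp hp
    have h0 : (q⁻¹) ^ p.1 * q ^ p.2.1 - 1 = 0 := by
      rcases mul_eq_zero.mp (hcoef p hp) with h | h
      · exact absurd h hlp
      · exact h
    have h1 : (q⁻¹) ^ p.1 * q ^ p.2.1 = 1 := sub_eq_zero.mp h0
    have h2 : q ^ p.2.1 = q ^ p.1 := by
      have h3 := congrArg (fun t => q ^ p.1 * t) h1
      simp only [← mul_assoc, mul_one] at h3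
      rw [← mul_pow, mul_inv_cancel₀ hq0, one_pow, one_mul] at h3
      exact h3
    exact (pow_inj_of_not_root hq0 hq h2).symm
  -- conclude
  rw [← hlv, Finsupp.sum]
  exact Submodule.sum_mem (Subalgebra.toSubmodule T)
    (fun p hp => (Subalgebra.toSubmodule T).smul_mem _ (hmonT p (hdiag p hp)))
end

section
/- There is a representation of U_{r,s}(osp(1,2)) on the localized polynomial ring B = ℂ[X, Y, Z, W, Z⁻¹, W⁻¹]: the operators E, F, Ω, Ω' defined on basis monomials by F(X^a Y^b Z^c W^d) = X^{a+1} Y^b Z^c W^d, Ω(X^a Y^b Z^c W^d) = q^{b-a} X^a Y^b Z^{c+1} W^d, Ω'(X^a Y^b Z^c W^d) = q^{a-b} X^a Y^b Z^c W^{d+1}, and E(X^a Y^b Z^c W^d) = (r-s)⁻¹ X^{a-1} Y^b ( q^b ((q^{-a} + (-1)^{a-1})/(q^{-1}+1)) Z - q^{-b} ((q^a + (-1)^{a-1})/(q+1)) W ) Z^c W^d + (-1)^a X^a Y^{b+1} Z^c W^d, satisfy EF + FE = (r-s)⁻¹(Ω - Ω') as operators on B. -/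
/-- The operators E, F, Ω, Ω' on B = ℂ[X,Y,Z,W,Z⁻¹,W⁻¹] (realized as finitely supported
functions on ℕ × ℕ × ℤ × ℤ, the basis monomial X^a Y^b Z^c W^d corresponding to
`Finsupp.single (a,b,c,d) 1`), defined on basis monomials as in the paper, satisfy
EF + FE = (r-s)⁻¹ (Ω - Ω').  Here (-1)^{a-1} is written as -(-1)^a. -/
theorem rep_on_localized_polynomials
    (r s q : ℂ) (hq2 : q ^ 2 = r * s) (hq0 : q ≠ 0) (hq1 : q ≠ 1) (hqm1 : q ≠ -1)
    (hrs : r ≠ s)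
    (E F Ω Ω' : ((ℕ × ℕ × ℤ × ℤ) →₀ ℂ) →ₗ[ℂ] ((ℕ × ℕ × ℤ × ℤ) →₀ ℂ))
    (hF : ∀ (a b : ℕ) (c d : ℤ),
      F (Finsupp.single (a, b, c, d) 1) = Finsupp.single (a + 1, b, c, d) 1)
    (hΩ : ∀ (a b : ℕ) (c d : ℤ),
      Ω (Finsupp.single (a, b, c, d) 1) =
        (q ^ ((b : ℤ) - (a : ℤ))) • Finsupp.single (a, b, c + 1, d) 1)
    (hΩ' : ∀ (a b : ℕ) (c d : ℤ),
      Ω' (Finsupp.single (a, b, c, d) 1) =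
        (q ^ ((a : ℤ) - (b : ℤ))) • Finsupp.single (a, b, c, d + 1) 1)
    (hE : ∀ (a b : ℕ) (c d : ℤ),
      E (Finsupp.single (a, b, c, d) 1) =
        ((r - s)⁻¹ * q ^ (b : ℤ) * ((q ^ (-(a : ℤ)) - (-1 : ℂ) ^ a) / (q⁻¹ + 1))) •
            Finsupp.single (a - 1, b, c + 1, d) 1
          - ((r - s)⁻¹ * q ^ (-(b : ℤ)) * ((q ^ (a : ℤ) - (-1 : ℂ) ^ a) / (q + 1))) •
            Finsupp.single (a - 1, b, c, d + 1) 1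
          + ((-1 : ℂ) ^ a) • Finsupp.single (a, b + 1, c, d) 1) :
    E ∘ₗ F + F ∘ₗ E = (r - s)⁻¹ • (Ω - Ω') := by
  have hq1'' : q + 1 ≠ 0 := fun h => hqm1 (by linear_combination h)
  have hq1' : q⁻¹ + 1 ≠ 0 := by
    intro h
    apply hq1''
    have : q * (q⁻¹ + 1) = q * 0 := by rw [h]
    rw [mul_add, mul_inv_cancel₀ hq0, mul_zero] at this
    linear_combination this
  have hrs' : r - s ≠ 0 := sub_ne_zero.mpr hrs
  have h1q : (1 : ℂ) + q ≠ 0 := by rwa [add_comm] at hq1''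
  have e0 : q⁻¹ + 1 = (q + 1) * q⁻¹ := by
    rw [add_mul, one_mul, mul_inv_cancel₀ hq0, add_comm]
  apply Finsupp.lhom_ext
  intro x v
  obtain ⟨a, b, c, d⟩ := x
  have hv : (Finsupp.single (a,b,c,d) v : (ℕ × ℕ × ℤ × ℤ) →₀ ℂ) = v • Finsupp.single (a,b,c,d) 1 := by
    rw [Finsupp.smul_single, smul_eq_mul, mul_one]
  rw [hv, map_smul, map_smul]
  congr 1
  simp only [LinearMap.add_apply, LinearMap.comp_apply, LinearMap.smul_apply,
    LinearMap.sub_apply, hF, hE, hΩ, hΩ', map_add, map_sub, map_smul]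
  cases a with
  | zero =>
    simp only [Nat.zero_sub, Nat.zero_add, zero_add, hF]
    match_scalars <;>
    · push_cast
      simp only [zpow_sub₀ hq0, zpow_neg, zpow_add₀ hq0, zpow_one, zpow_natCast, zpow_zero,
        pow_zero, div_eq_mul_inv, e0, mul_inv, inv_inv]
      field_simp [h1q]
      try ring
  | succ n =>
    simp only [Nat.add_sub_cancel, Nat.succ_sub_one, hF]
    match_scalars <;> push_cast
    · have h2 : q ^ (-(↑n + 1 + 1) : ℤ) = q ^ (-(↑n + 1) : ℤ) * q⁻¹ := by
        rw [← zpow_neg_one, ← zpow_add₀ hq0]; ring_nf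
      have hA : q ^ (-(↑n + 1 + 1) : ℤ) - (-1 : ℂ) ^ (n + 1 + 1) +
          (q ^ (-(↑n + 1) : ℤ) - (-1) ^ (n + 1)) = q ^ (-(↑n + 1) : ℤ) * (q⁻¹ + 1) := by
        rw [h2, pow_succ]; ring
      have hb1 : q ^ ((b : ℤ) - (↑n + 1)) = q ^ (b : ℤ) * q ^ (-(↑n + 1) : ℤ) := by
        rw [← zpow_add₀ hq0]; ring_nf
      calc (r - s)⁻¹ * q ^ (b : ℤ) * ((q ^ (-(↑n + 1 + 1) : ℤ) - (-1) ^ (n + 1 + 1)) / (q⁻¹ + 1)) * 1 +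
            (r - s)⁻¹ * q ^ (b : ℤ) * ((q ^ (-(↑n + 1) : ℤ) - (-1) ^ (n + 1)) / (q⁻¹ + 1)) * 1
          = (r - s)⁻¹ * q ^ (b : ℤ) *
            ((q ^ (-(↑n + 1 + 1) : ℤ) - (-1) ^ (n + 1 + 1) +
              (q ^ (-(↑n + 1) : ℤ) - (-1) ^ (n + 1))) / (q⁻¹ + 1)) := by ring
        _ = (r - s)⁻¹ * q ^ (b : ℤ) * (q ^ (-(↑n + 1) : ℤ) * (q⁻¹ + 1) / (q⁻¹ + 1)) := by
            rw [hA]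
        _ = (r - s)⁻¹ * q ^ (b : ℤ) * q ^ (-(↑n + 1) : ℤ) := by
            rw [mul_div_cancel_right₀ _ hq1']
        _ = (r - s)⁻¹ * (q ^ ((b : ℤ) - (↑n + 1)) * 1) := by rw [hb1]; ring
    · have h2 : q ^ ((↑n : ℤ) + 1 + 1) = q ^ ((↑n : ℤ) + 1) * q :=
        zpow_add_one₀ hq0 _
      have hA : q ^ ((↑n : ℤ) + 1 + 1) - (-1 : ℂ) ^ (n + 1 + 1) +
          (q ^ ((↑n : ℤ) + 1) - (-1) ^ (n + 1)) = q ^ ((↑n : ℤ) + 1) * (q + 1) := by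
        rw [h2, pow_succ]; ring
      have hb1 : q ^ ((↑n : ℤ) + 1 - (b : ℤ)) = q ^ ((↑n : ℤ) + 1) * q ^ (-(b : ℤ)) := by
        rw [← zpow_add₀ hq0]; ring_nf
      calc -((r - s)⁻¹ * q ^ (-(b : ℤ)) * ((q ^ ((↑n : ℤ) + 1 + 1) - (-1) ^ (n + 1 + 1)) / (q + 1)) * 1) +
            -((r - s)⁻¹ * q ^ (-(b : ℤ)) * ((q ^ ((↑n : ℤ) + 1) - (-1) ^ (n + 1)) / (q + 1)) * 1)
          = -((r - s)⁻¹ * q ^ (-(b : ℤ)) *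
            ((q ^ ((↑n : ℤ) + 1 + 1) - (-1) ^ (n + 1 + 1) +
              (q ^ ((↑n : ℤ) + 1) - (-1) ^ (n + 1))) / (q + 1))) := by ring
        _ = -((r - s)⁻¹ * q ^ (-(b : ℤ)) * (q ^ ((↑n : ℤ) + 1) * (q + 1) / (q + 1))) := by
            rw [hA]
        _ = -((r - s)⁻¹ * q ^ (-(b : ℤ)) * q ^ ((↑n : ℤ) + 1)) := by
            rw [mul_div_cancel_right₀ _ hq1'']
        _ = (r - s)⁻¹ * -(q ^ ((↑n : ℤ) + 1 - (b : ℤ)) * 1) := by rw [hb1]; ring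
    · rw [pow_succ]; ring
end
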